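/- If every triangular graph H (a graph in which every edge lies in a triangle) on m vertices satisfies α₁(H) + τ(H) ≤ m²/4, then every graph G on n vertices satisfies α₁(G) + τ(G) ≤ n²/4. -/

import Mathlib

open Finset

/-- `A` is a triangle-independent set of edges of `G`: it consists of edges of `G`
and contains at most one edge from each triangle of `G`. -/
def TriIndep {V : Type*} (G : SimpleGraph V) (A : Finset (Sym2 V)) : Prop :=
  (A : Set (Sym2 V)) ⊆ G.edgeSet ∧
    ∀ x y z : V, G.Adj x y → G.Adj y z → G.Adj x z →
      ¬(s(x, y) ∈ A ∧ s(y, z) ∈ A)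

/-- `α₁ G`: the maximum size of a triangle-independent set of edges of `G`. -/
noncomputable def alpha1 {V : Type*} [Fintype V] (G : SimpleGraph V) : ℕ :=
  sSup {k | ∃ A : Finset (Sym2 V), TriIndep G A ∧ A.card = k}

/-- `τ G`: the minimum size of a set of edges whose deletion makes `G` triangle-free. -/
noncomputable def tau {V : Type*} [Fintype V] (G : SimpleGraph V) : ℕ :=
  sInf {k | ∃ X : Finset (Sym2 V), (X : Set (Sym2 V)) ⊆ G.edgeSet ∧
    (G.deleteEdges (X : Set (Sym2 V))).CliqueFree 3 ∧ X.card = k}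

/-- `τ_B G`: the minimum size of a set of edges whose deletion makes `G` bipartite. -/
noncomputable def tauB {V : Type*} [Fintype V] (G : SimpleGraph V) : ℕ :=
  sInf {k | ∃ X : Finset (Sym2 V), (X : Set (Sym2 V)) ⊆ G.edgeSet ∧
    (G.deleteEdges (X : Set (Sym2 V))).Colorable 2 ∧ X.card = k}

open scoped Classical in
/-- The edge cut `[S, S̄]`: the set of edges of `G` with one endpoint in `S`
and the other outside `S`. -/
noncomputable def edgeCut {V : Type*} [Fintype V] (G : SimpleGraph V) (S : Finset V) :
    Finset (Sym2 V) :=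
  G.edgeFinset.filter (fun e => ∃ x ∈ S, ∃ y ∉ S, e = s(x, y))

open scoped Classical in
/-- The number of edges of `G`. -/
noncomputable def edgeCount {V : Type*} [Fintype V] (G : SimpleGraph V) : ℕ :=
  G.edgeFinset.card

/-- The independence number of `G`. -/
noncomputable def indepNum {V : Type*} [Fintype V] (G : SimpleGraph V) : ℕ :=
  sSup {k | ∃ I : Finset V, (∀ x ∈ I, ∀ y ∈ I, ¬G.Adj x y) ∧ I.card = k}

/-- `K₄⁻`: the complete graph on 4 vertices with one edge deleted. -/
def K4minus : SimpleGraph (Fin 4) := (SimpleGraph.completeGraph (Fin 4)).deleteEdges {s(0, 1)}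

/-!
If an edge `xy` lies in no triangle, `N(x)` and `N(y)` are disjoint, so `deg x + deg y ≤ n` and
some vertex `u` has `2 deg u ≤ n`. Deleting `u` lowers `α₁ + τ` by at most `deg u`: the
neighbours `w` with `uw` in a maximum triangle-independent set `A` form an independent set `W`
(two adjacent ones would give two edges of `A` in one triangle), while a minimum triangle edge
cover of `G - u` together with the edges from `u` to `N(u) \ W` covers every triangle of `G`.
By induction `4 (α₁ + τ)(G) ≤ (n - 1)² + 2n = n² + 1`, and as `n² ≢ 3 (mod 4)` this sharpens
to `n²`; a triangular graph is handled by the hypothesis directly.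
-/

open scoped Classical

section Extremal

variable {V : Type*} [Fintype V] {G : SimpleGraph V}

theorem TriIndep.subset_edgeFinset {A : Finset (Sym2 V)} (hA : TriIndep G A) :
    A ⊆ G.edgeFinset := fun _ he => SimpleGraph.mem_edgeFinset.2 (hA.1 he)

theorem bddAbove_triIndep_card (G : SimpleGraph V) :
    BddAbove {k | ∃ A : Finset (Sym2 V), TriIndep G A ∧ A.card = k} :=
  ⟨G.edgeFinset.card, by rintro _ ⟨A, hA, rfl⟩; exact card_le_card hA.subset_edgeFinset⟩

theorem exists_triIndep_card_eq_alpha1 (G : SimpleGraph V) :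
    ∃ A : Finset (Sym2 V), TriIndep G A ∧ A.card = alpha1 G := by
  have hne : {k | ∃ A : Finset (Sym2 V), TriIndep G A ∧ A.card = k}.Nonempty :=
    ⟨0, ∅, ⟨by simp, by simp⟩, rfl⟩
  exact Nat.sSup_mem hne (bddAbove_triIndep_card G)

theorem TriIndep.card_le_alpha1 {A : Finset (Sym2 V)} (hA : TriIndep G A) :
    A.card ≤ alpha1 G :=
  le_csSup (bddAbove_triIndep_card G) ⟨A, hA, rfl⟩

theorem exists_card_eq_tau (G : SimpleGraph V) :
    ∃ X : Finset (Sym2 V), (X : Set (Sym2 V)) ⊆ G.edgeSet ∧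
      (G.deleteEdges (X : Set (Sym2 V))).CliqueFree 3 ∧ X.card = tau G := by
  have hne : {k | ∃ X : Finset (Sym2 V), (X : Set (Sym2 V)) ⊆ G.edgeSet ∧
      (G.deleteEdges (X : Set (Sym2 V))).CliqueFree 3 ∧ X.card = k}.Nonempty :=
    ⟨_, G.edgeFinset, by simp, by simp, rfl⟩
  exact Nat.sInf_mem hne

theorem tau_le_card {X : Finset (Sym2 V)} (hXG : (X : Set (Sym2 V)) ⊆ G.edgeSet)
    (hX : (G.deleteEdges (X : Set (Sym2 V))).CliqueFree 3) : tau G ≤ X.card :=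
  Nat.sInf_le ⟨X, hXG, hX, rfl⟩

end Extremal

section DeleteVertex

variable {V : Type*}

theorem SimpleGraph.degree_add_degree_le_card [Fintype V] (G : SimpleGraph V) {x y : V}
    (h : ∀ z, G.Adj x z → ¬G.Adj y z) : G.degree x + G.degree y ≤ Fintype.card V := by
  rw [← G.card_neighborFinset_eq_degree, ← G.card_neighborFinset_eq_degree,
    ← card_union_of_disjoint (Finset.disjoint_left.2 fun z hx hy => h z (by simpa using hx)
      (by simpa using hy))]
  exact card_le_univ _

theorem TriIndep.comap {W : Type*} [Fintype W] {G : SimpleGraph V} {A : Finset (Sym2 V)}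
    (hA : TriIndep G A) (f : W → V) :
    TriIndep (G.comap f) (univ.filter fun e => e.map f ∈ A) := by
  refine ⟨fun e he => ?_, fun x y z hxy hyz hxz ⟨h₁, h₂⟩ => ?_⟩
  · induction e using Sym2.ind with
    | _ a b => simpa using hA.1 (mem_filter.1 he).2
  · simp only [mem_filter, mem_univ, Sym2.map_mk, true_and] at h₁ h₂
    exact hA.2 _ _ _ hxy hyz hxz ⟨h₁, h₂⟩

theorem SimpleGraph.cliqueFree_three_of_induce_compl (H : SimpleGraph V) (u : V)
    (hH : (H.induce {u}ᶜ).CliqueFree 3) (hu : ∀ b c, H.Adj u b → H.Adj u c → ¬H.Adj b c) :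
    H.CliqueFree 3 := by
  intro t ht
  by_cases hut : u ∈ t
  · obtain ⟨b, c, hbc, hbct⟩ := card_eq_two.1 (ht.erase_of_mem hut).card_eq
    have hb : b ∈ t.erase u := by simp [hbct]
    have hc : c ∈ t.erase u := by simp [hbct]
    exact hu b c (ht.1 hut (mem_of_mem_erase hb) (ne_of_mem_erase hb).symm)
      (ht.1 hut (mem_of_mem_erase hc) (ne_of_mem_erase hc).symm)
      (ht.1 (mem_of_mem_erase hb) (mem_of_mem_erase hc) hbc)
  · have hsub : ∀ x ∈ t, x ∈ ({u}ᶜ : Set V) := fun x hx => by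
      rintro rfl
      exact hut hx
    refine hH (t.subtype (· ∈ ({u}ᶜ : Set V))) ?_
    rwa [SimpleGraph.isNClique_induce_iff, subtype_map_of_mem hsub]

variable [Fintype V] (G : SimpleGraph V) (u : V)

theorem exists_isIndepSet_alpha1_le :
    ∃ W ⊆ G.neighborFinset u, G.IsIndepSet (W : Set V) ∧
      alpha1 G ≤ alpha1 (G.induce {u}ᶜ) + W.card := by
  obtain ⟨A, hA, hcard⟩ := exists_triIndep_card_eq_alpha1 G
  set W := (G.neighborFinset u).filter fun w => s(u, w) ∈ A
  refine ⟨W, filter_subset _ _, fun x hx y hy _ hxy => ?_, ?_⟩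
  · simp only [W, coe_filter, Set.mem_ofPred_eq, SimpleGraph.mem_neighborFinset] at hx hy
    exact hA.2 x u y hx.1.symm hy.1 hxy ⟨by rw [Sym2.eq_swap]; exact hx.2, hy.2⟩
  have hat : A.filter (u ∈ ·) ⊆ W.image (s(u, ·)) := by
    intro e he
    obtain ⟨heA, hue⟩ := mem_filter.1 he
    obtain ⟨w, rfl⟩ := Sym2.mem_iff_exists.1 hue
    exact mem_image_of_mem _ (mem_filter.2 ⟨by simpa using hA.1 heA, heA⟩)
  have hoff : A.filter (u ∉ ·) ⊆
      (univ.filter fun e : Sym2 ({u}ᶜ : Set V) => e.map (↑) ∈ A).image (Sym2.map (↑)) := by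
    intro e he
    obtain ⟨heA, hue⟩ := mem_filter.1 he
    have hcompl : ∀ x ∈ e, x ∈ ({u}ᶜ : Set V) := fun x hx hxu => hue (hxu ▸ hx)
    refine mem_image.2 ⟨e.attachWith hcompl, ?_, Sym2.attachWith_map_subtypeVal hcompl⟩
    simpa [Sym2.attachWith_map_subtypeVal] using heA
  calc alpha1 G = (A.filter (u ∈ ·)).card + (A.filter (u ∉ ·)).card := by
        rw [card_filter_add_card_filter_not, hcard]
    _ ≤ W.card + alpha1 (G.induce {u}ᶜ) :=
        add_le_add ((card_le_card hat).trans card_image_le)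
          ((card_le_card hoff).trans (card_image_le.trans (hA.comap _).card_le_alpha1))
    _ = alpha1 (G.induce {u}ᶜ) + W.card := add_comm _ _

theorem tau_le_tau_induce_compl_add {W : Finset V} (hWu : W ⊆ G.neighborFinset u)
    (hW : G.IsIndepSet (W : Set V)) :
    tau G ≤ tau (G.induce {u}ᶜ) + (G.degree u - W.card) := by
  obtain ⟨X', hX'G, hX', hcard⟩ := exists_card_eq_tau (G.induce {u}ᶜ)
  set X := X'.image (Sym2.map (↑)) ∪ (G.neighborFinset u \ W).image (s(u, ·))
  have hXG : (X : Set (Sym2 V)) ⊆ G.edgeSet := by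
    intro e he
    rcases mem_union.1 he with he | he
    · obtain ⟨e', he', rfl⟩ := mem_image.1 he
      induction e' using Sym2.ind with
      | _ a b => simpa using hX'G he'
    · obtain ⟨w, hw, rfl⟩ := mem_image.1 he
      simpa using (mem_sdiff.1 hw).1
  have hX : (G.deleteEdges (X : Set (Sym2 V))).CliqueFree 3 := by
    refine SimpleGraph.cliqueFree_three_of_induce_compl _ u (hX'.anti fun a b hab => ?_) ?_
    · simp only [SimpleGraph.induce_adj, SimpleGraph.deleteEdges_adj] at hab ⊢
      exact ⟨hab.1, fun he => hab.2 (mem_union_left _ (mem_image_of_mem _ he))⟩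
    · have hmem : ∀ b, (G.deleteEdges (X : Set (Sym2 V))).Adj u b → b ∈ W := fun b hb => by
        rw [SimpleGraph.deleteEdges_adj] at hb
        by_contra hbW
        exact hb.2 (mem_union_right _
          (mem_image_of_mem _ (mem_sdiff.2 ⟨(G.mem_neighborFinset u b).2 hb.1, hbW⟩)))
      intro b c hb hc hbc
      exact hW (hmem b hb) (hmem c hc) hbc.ne hbc.1
  calc tau G ≤ X.card := tau_le_card hXG hX
    _ ≤ X'.card + (G.neighborFinset u \ W).card :=
        (card_union_le _ _).trans (add_le_add card_image_le card_image_le)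
    _ = tau (G.induce {u}ᶜ) + (G.degree u - W.card) := by
        rw [hcard, card_sdiff_of_subset hWu, G.card_neighborFinset_eq_degree]

theorem alpha1_add_tau_le_induce_compl_add_degree :
    alpha1 G + tau G ≤ alpha1 (G.induce {u}ᶜ) + tau (G.induce {u}ᶜ) + G.degree u := by
  obtain ⟨W, hWu, hW, hα⟩ := exists_isIndepSet_alpha1_le G u
  have hτ := tau_le_tau_induce_compl_add G u hWu hW
  have hWdeg : W.card ≤ G.degree u := G.card_neighborFinset_eq_degree u ▸ card_le_card hWu
  omega

end DeleteVertex

theorem four_mul_le_sq_of_le_sq_add_one {k n : ℕ} (h : 4 * k ≤ n ^ 2 + 1) : 4 * k ≤ n ^ 2 := by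
  rcases Nat.even_or_odd' n with ⟨t, rfl | rfl⟩ <;> ring_nf at h ⊢ <;> omega

theorem four_mul_alpha1_add_tau_le_sq
    (h : ∀ (W : Type) [Fintype W] (H : SimpleGraph W),
      (∀ x y : W, H.Adj x y → ∃ z : W, H.Adj x z ∧ H.Adj y z) →
      (alpha1 H + tau H : ℝ) ≤ (Fintype.card W : ℝ) ^ 2 / 4)
    (n : ℕ) : ∀ (V : Type) [Fintype V] (G : SimpleGraph V),
      Fintype.card V = n → 4 * (alpha1 G + tau G) ≤ n ^ 2 := by
  induction n using Nat.strong_induction_on with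
  | _ n ih =>
  intro V _ G hn
  by_cases htri : ∀ x y : V, G.Adj x y → ∃ z, G.Adj x z ∧ G.Adj y z
  · have hG := h V G htri
    rw [hn] at hG
    exact_mod_cast (by linarith : (4 * (alpha1 G + tau G) : ℝ) ≤ n ^ 2)
  push Not at htri
  obtain ⟨x, y, -, hxy⟩ := htri
  obtain ⟨u, hu⟩ : ∃ u, 2 * G.degree u ≤ n := by
    have := hn ▸ G.degree_add_degree_le_card hxy
    rcases le_total (G.degree x) (G.degree y) with hle | hle
    exacts [⟨x, by omega⟩, ⟨y, by omega⟩]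
  obtain ⟨m, rfl⟩ : ∃ m, n = m + 1 := ⟨n - 1, by have := hn ▸ Fintype.card_pos_iff.2 ⟨u⟩; omega⟩
  have hcard : Fintype.card ({u}ᶜ : Set V) = m := by simp [filter_ne', hn]
  have hdel := ih m (by omega) _ (G.induce {u}ᶜ) hcard
  have hstep := alpha1_add_tau_le_induce_compl_add_degree G u
  apply four_mul_le_sq_of_le_sq_add_one
  linarith

/-- If every triangular graph (every edge lies in a triangle) on `m` vertices satisfies
`α₁(H) + τ(H) ≤ m²/4`, then every graph `G` on `n` vertices satisfies
`α₁(G) + τ(G) ≤ n²/4`. -/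
theorem stmt3
    (h : ∀ (W : Type) [Fintype W] (H : SimpleGraph W),
      (∀ x y : W, H.Adj x y → ∃ z : W, H.Adj x z ∧ H.Adj y z) →
      (alpha1 H + tau H : ℝ) ≤ (Fintype.card W : ℝ) ^ 2 / 4) :
    ∀ (V : Type) [Fintype V] (G : SimpleGraph V),
      (alpha1 G + tau G : ℝ) ≤ (Fintype.card V : ℝ) ^ 2 / 4 := by
  intro V _ G
  have h4 : ((4 * (alpha1 G + tau G) : ℕ) : ℝ) ≤ ((Fintype.card V ^ 2 : ℕ) : ℝ) := by
    exact_mod_cast four_mul_alpha1_add_tau_le_sq h _ V G rfl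
  push_cast at h4
  linarith
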